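/- arXiv:1705.04716 — 2 statements merged into one kernel-verified Lean document; each statement's English description precedes it below -/
import Mathlib

section
/- If 𝒳 = {X₁,…,X_t} is a Hadamard (G,K,λ)-PDF (so |G| = 2λ and the X_i partition G), then the collection {^2 X_i : 1 ≤ i ≤ t} of doubled blocks is a (G, 2K, 4λ) strong difference family: every element of G (including 0) occurs exactly 4λ times in the multiset sum of the lists of differences of the doubled blocks. -/
/-- The multiplicity of `g` in the list of differences `ΔX` of the subset `X`. -/
def diffCount {G : Type*} [AddGroup G] [DecidableEq G] (X : Finset G) (g : G) : ℕ :=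
  ((X ×ˢ X).filter fun p => p.1 ≠ p.2 ∧ p.1 - p.2 = g).card

/-- The list of differences of a multiset `M` (ordered pairs of distinct positions). -/
def deltaM {G : Type*} [AddGroup G] [DecidableEq G] (M : Multiset G) : Multiset G :=
  ((M ×ˢ M).map fun p => p.1 - p.2) - Multiset.replicate (Multiset.card M) 0

lemma diffCount_zero {G : Type*} [AddGroup G] [DecidableEq G] (X : Finset G) :
    diffCount X (0 : G) = 0 := by
  rw [diffCount, Finset.card_eq_zero]
  apply Finset.filter_false_of_mem
  rintro ⟨a, b⟩ _ ⟨hne, h0⟩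
  exact hne (sub_eq_zero.mp h0)

lemma base_count {G : Type*} [AddGroup G] [DecidableEq G] (Y : Finset G) (g : G) :
    ((Y.val ×ˢ Y.val).map (fun p : G × G => p.1 - p.2)).count g
      = diffCount Y g + (if g = 0 then Y.card else 0) := by
  rw [Multiset.count_map, ← Finset.product_val, ← Finset.filter_val]
  show ((Y ×ˢ Y).filter fun p => g = p.1 - p.2).card = _
  by_cases hg : g = 0
  · subst hg
    rw [diffCount_zero, if_pos rfl, zero_add]
    have : ((Y ×ˢ Y).filter fun p => (0:G) = p.1 - p.2) = Y.diag := by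
      ext ⟨a, b⟩
      simp only [Finset.mem_filter, Finset.mem_product, Finset.mem_diag, eq_comm,
        sub_eq_zero]
      constructor
      · rintro ⟨⟨h1, h2⟩, h3⟩; exact ⟨h1, h3⟩
      · rintro ⟨h1, h3⟩; exact ⟨⟨h1, h3 ▸ h1⟩, h3⟩
    rw [this, Finset.diag_card]
  · rw [if_neg hg, add_zero, diffCount]
    congr 1
    ext ⟨a, b⟩
    simp only [Finset.mem_filter, Finset.mem_product]
    constructor
    · rintro ⟨hm, h⟩
      refine ⟨hm, ?_, h.symm⟩
      rintro rfl
      exact hg (h.trans (sub_self a))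
    · rintro ⟨hm, _, h⟩
      exact ⟨hm, h.symm⟩

lemma key_count {G : Type*} [AddGroup G] [Fintype G] [DecidableEq G] (Y : Finset G) (g : G) :
    (deltaM (2 • Y.val)).count g = 4 * diffCount Y g + (if g = 0 then 2 * Y.card else 0) := by
  rw [deltaM, Multiset.count_sub, Multiset.count_replicate]
  simp only [two_nsmul, Multiset.add_product, Multiset.product_add, Multiset.map_add,
    Multiset.count_add, Multiset.card_add, base_count]
  have hc : Multiset.card Y.val = Y.card := rfl
  by_cases hg : g = 0
  · subst hg
    simp only [if_pos rfl, diffCount_zero, hc, if_true, eq_self_iff_true]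
    omega
  · rw [if_neg hg, if_neg (fun h : (0:G) = g => hg h.symm), if_neg hg]
    omega

/-- If `𝒳 = {X₁,…,X_t}` is a Hadamard `(G,K,λ)`-PDF (so `|G| = 2λ` and the `Xᵢ` partition
`G` into nonempty blocks), then `{²Xᵢ : 1 ≤ i ≤ t}` is a `(G, 2K, 4λ)` strong difference
family: every element of `G` (including `0`) occurs exactly `4λ` times in the multiset sum
of the difference lists of the doubled blocks. -/
theorem hadamard_sdf_from_hadamard_pdf {G : Type*} [AddCommGroup G] [Fintype G]
    [DecidableEq G] (lam t : ℕ) (X : Fin t → Finset G)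
    (hcard : Fintype.card G = 2 * lam)
    (hne : ∀ i, (X i).Nonempty)
    (hdisj : ∀ i j, i ≠ j → Disjoint (X i) (X j))
    (hcover : ∀ g : G, ∃ i, g ∈ X i)
    (hpdf : ∀ g : G, g ≠ 0 → ∑ i, diffCount (X i) g = lam) :
    ∀ g : G, ∑ i, (deltaM (2 • (X i).val)).count g = 4 * lam := by
  intro g
  simp only [key_count]
  rw [Finset.sum_add_distrib, ← Finset.mul_sum]
  by_cases hg : g = 0
  · subst hg
    simp only [diffCount_zero, Finset.sum_const_zero, mul_zero, if_pos rfl, zero_add,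
      if_true, eq_self_iff_true]
    rw [← Finset.mul_sum]
    have hsum : ∑ i, (X i).card = Fintype.card G := by
      have huniv : Finset.univ.biUnion X = Finset.univ := by
        ext x
        simpa using hcover x
      calc ∑ i, (X i).card
          = (Finset.univ.biUnion X).card := (Finset.card_biUnion
            (fun i _ j _ hij => hdisj i j hij)).symm
        _ = Fintype.card G := by rw [huniv, Finset.card_univ]
    rw [hsum, hcard]
    ring
  · simp only [if_neg hg, Finset.sum_const_zero, add_zero, hpdf g hg]
end

section
/- The four subsets X₁ = {(0,0),(2,0)}, X₂ = {(1,0),(3,4)}, X₃ = {(0,1),(0,3),(1,2),(1,5),(1,6),(3,3)}, and X₄ = G ∖ (X₁ ∪ X₂ ∪ X₃) form a (32, [2,2,6,22], 16)-PDF in the non-abelian group G of order 32 whose underlying set is Z₄ × Z₈ with operation (x₁,y₁)+(x₂,y₂) = (x₁+x₂, 5^{x₂}·y₁ + y₂): i.e., they partition G and every non-identity element of G occurs exactly 16 times in the multiset sum of the difference lists ΔX_i, where ΔX = {x − x' : x ≠ x' ∈ X} with x − x' meaning x + (inverse of x') in G. -/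
/-- The non-abelian group of order 32 whose elements are the pairs of `ZMod 4 × ZMod 8`
with operation `(x₁,y₁)+(x₂,y₂) = (x₁+x₂, 5^{x₂}·y₁+y₂)`. -/
def G32 : Type := ZMod 4 × ZMod 8

instance : DecidableEq G32 := inferInstanceAs (DecidableEq (ZMod 4 × ZMod 8))
instance : Fintype G32 := inferInstanceAs (Fintype (ZMod 4 × ZMod 8))

def G32.mk (x : ZMod 4) (y : ZMod 8) : G32 := (x, y)

instance : Zero G32 := ⟨G32.mk 0 0⟩
instance : Add G32 := ⟨fun a b => G32.mk (a.1 + b.1) (5 ^ (b.1 : ZMod 4).val * a.2 + b.2)⟩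
instance : Neg G32 := ⟨fun a => G32.mk (-a.1) (-(5 ^ ((-a.1 : ZMod 4)).val * a.2))⟩

private lemma pow5_add : ∀ b c : ZMod 4,
    (5 : ZMod 8) ^ ((b + c).val) = 5 ^ b.val * 5 ^ c.val := by decide

private lemma pow5_neg : ∀ x : ZMod 4,
    (5 : ZMod 8) ^ x.val * 5 ^ ((-x).val) = 1 := by decide

instance : AddGroup G32 where
  add_assoc a b c := by
    refine Prod.ext ?_ ?_
    · exact add_assoc a.1 b.1 c.1
    · show (5 : ZMod 8) ^ (c.1 : ZMod 4).val * (5 ^ (b.1 : ZMod 4).val * a.2 + b.2) + c.2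
        = 5 ^ ((b.1 + c.1 : ZMod 4)).val * a.2 + (5 ^ (c.1 : ZMod 4).val * b.2 + c.2)
      rw [pow5_add]; ring
  zero_add a := by
    refine Prod.ext (zero_add a.1) ?_
    show (5 : ZMod 8) ^ (a.1 : ZMod 4).val * 0 + a.2 = a.2
    rw [mul_zero, zero_add]
  add_zero a := by
    refine Prod.ext (add_zero a.1) ?_
    show (5 : ZMod 8) ^ (0 : ZMod 4).val * a.2 + 0 = a.2
    simp
  neg_add_cancel a := by
    refine Prod.ext (neg_add_cancel a.1) ?_
    show (5 : ZMod 8) ^ (a.1 : ZMod 4).val *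
        (-(5 ^ ((-a.1 : ZMod 4)).val * a.2)) + a.2 = 0
    rw [mul_neg, ← mul_assoc, pow5_neg, one_mul, neg_add_cancel]
  nsmul := nsmulRec
  zsmul := zsmulRec

open G32 in
set_option maxRecDepth 10000 in
set_option maxHeartbeats 4000000 in
/-- The four displayed blocks form a `(32, [2,2,6,22], 16)`-PDF in the non-abelian group
`G32`: they partition `G32`, have sizes `2, 2, 6, 22`, and every non-identity element
occurs exactly `16` times in `ΔX₁ ⊎ ΔX₂ ⊎ ΔX₃ ⊎ ΔX₄`. -/
theorem sporadic_hadamard_pdf_of_order_32 :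
    let X1 : Finset G32 := {mk 0 0, mk 2 0}
    let X2 : Finset G32 := {mk 1 0, mk 3 4}
    let X3 : Finset G32 := {mk 0 1, mk 0 3, mk 1 2, mk 1 5, mk 1 6, mk 3 3}
    let X4 : Finset G32 := (X1 ∪ X2 ∪ X3)ᶜ
    (Fintype.card G32 = 32) ∧
    X1.card = 2 ∧ X2.card = 2 ∧ X3.card = 6 ∧ X4.card = 22 ∧
    Disjoint X1 X2 ∧ Disjoint X1 X3 ∧ Disjoint X2 X3 ∧
    X1 ∪ X2 ∪ X3 ∪ X4 = Finset.univ ∧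
    ∀ g : G32, g ≠ 0 →
      diffCount X1 g + diffCount X2 g + diffCount X3 g + diffCount X4 g = 16 := by
  decide
end
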